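/- Let a_1,…,a_n be nonzero vectors in ℂ^d, let ω_1,…,ω_n ∈ (0,2), and let R = P_{a_n}^{ω_n} ∘ ⋯ ∘ P_{a_1}^{ω_1} be the composition of the corresponding relaxed projections. Then there exists α < 1 such that ‖R x‖ ≤ α ‖x‖ for every x ∈ span{a_1,…,a_n}. -/

import Mathlib

/-!
Expanding the square gives `‖P_a^ω x‖² = ‖x‖² - ω(2-ω)|⟨a,x⟩|²/‖a‖²`, so for `ω ∈ (0,2)` each
relaxed projection is nonexpansive, fixes `x` when `⟨a,x⟩ = 0` and strictly shrinks `x` otherwise.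
A nonzero `x` in the span of the `a_i` is not orthogonal to all of them, so the first `P_{a_i}^{ω_i}`
that moves it shrinks it and `‖R x‖ < ‖x‖`. The restriction of the linear map `R` to the
finite-dimensional span attains its norm on the compact unit sphere, so that norm is `< 1`.
-/

/-- The relaxed projection `P_a^ω x = x - ω (⟨x,a⟩/‖a‖²) a` associated to a vector `a ∈ ℂ^d`
and a real relaxation parameter `ω`. -/
noncomputable def relaxProj {d : ℕ} (a : EuclideanSpace ℂ (Fin d)) (ω : ℝ)
    (x : EuclideanSpace ℂ (Fin d)) : EuclideanSpace ℂ (Fin d) :=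
  x - ((ω : ℂ) * ((inner ℂ a x : ℂ) / (‖a‖ : ℂ) ^ 2)) • a

open scoped InnerProductSpace

theorem List.foldl_apply_eq_foldl_comp {R M ι : Type*} [Semiring R] [TopologicalSpace M]
    [AddCommMonoid M] [Module R M] (f : ι → M →L[R] M) (l : List ι) (T : M →L[R] M) (x : M) :
    l.foldl (fun y i => f i y) (T x) = l.foldl (fun S i => (f i).comp S) T x := by
  induction l generalizing T with
  | nil => rfl
  | cons i l ih => exact ih ((f i).comp T)

theorem eq_zero_of_mem_span_of_forall_inner_eq_zero {𝕜 E ι : Type*} [RCLike 𝕜]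
    [NormedAddCommGroup E] [InnerProductSpace 𝕜 E] {v : ι → E} {x : E}
    (hx : x ∈ Submodule.span 𝕜 (Set.range v)) (h : ∀ i, ⟪v i, x⟫_𝕜 = 0) : x = 0 := by
  have hle : Submodule.span 𝕜 (Set.range v) ≤ (𝕜 ∙ x)ᗮ :=
    Submodule.span_le.2 <| Set.range_subset_iff.2 fun i =>
      Submodule.mem_orthogonal_singleton_iff_inner_left.2 (h i)
  exact inner_self_eq_zero.1 (Submodule.mem_orthogonal_singleton_iff_inner_right.1 (hle hx))

theorem ContinuousLinearMap.norm_lt_one_of_norm_apply_lt {𝕜 E F : Type*} [RCLike 𝕜]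
    [NormedAddCommGroup E] [NormedSpace 𝕜 E] [FiniteDimensional 𝕜 E]
    [NormedAddCommGroup F] [NormedSpace 𝕜 F] (T : E →L[𝕜] F) (h : ∀ x, x ≠ 0 → ‖T x‖ < ‖x‖) :
    ‖T‖ < 1 := by
  cases subsingleton_or_nontrivial E
  · simp [T.opNorm_subsingleton]
  have : NormedSpace ℝ E := NormedSpace.restrictScalars ℝ 𝕜 E
  have : ProperSpace E := FiniteDimensional.proper_rclike 𝕜 E
  obtain ⟨z, hz, hTz⟩ := ((isCompact_sphere (0 : E) 1).image T.continuous.norm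
    |>.sSup_mem ((NormedSpace.sphere_nonempty.2 zero_le_one).image _))
  have hz1 : ‖z‖ = 1 := mem_sphere_zero_iff_norm.1 hz
  rw [← T.sSup_sphere_eq_norm, ← hTz, ← hz1]
  exact h z (by rintro rfl; simp at hz1)

theorem ContinuousLinearMap.exists_lt_one_norm_apply_le_on {𝕜 E F : Type*} [RCLike 𝕜]
    [NormedAddCommGroup E] [NormedSpace 𝕜 E] [NormedAddCommGroup F] [NormedSpace 𝕜 F]
    (T : E →L[𝕜] F) (S : Submodule 𝕜 E) [FiniteDimensional 𝕜 S]
    (h : ∀ x ∈ S, x ≠ 0 → ‖T x‖ < ‖x‖) : ∃ α < 1, ∀ x ∈ S, ‖T x‖ ≤ α * ‖x‖ := by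
  refine ⟨‖T.comp S.subtypeL‖, ?_, fun x hx => (T.comp S.subtypeL).le_opNorm ⟨x, hx⟩⟩
  refine norm_lt_one_of_norm_apply_lt _ fun x hx => h x x.2 ?_
  exact_mod_cast hx

section
variable {d : ℕ}

theorem norm_relaxProj_sq (a : EuclideanSpace ℂ (Fin d)) (ω : ℝ) (x : EuclideanSpace ℂ (Fin d)) :
    ‖relaxProj a ω x‖ ^ 2 = ‖x‖ ^ 2 - ω * (2 - ω) * ‖⟪a, x⟫_ℂ‖ ^ 2 / ‖a‖ ^ 2 := by
  -- for `a = 0` both sides are `‖x‖ ^ 2`, the divisions by `‖a‖ ^ 2 = 0` giving `0`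
  rcases eq_or_ne a 0 with rfl | ha
  · simp [relaxProj]
  have ha' : ‖a‖ ≠ 0 := norm_ne_zero_iff.2 ha
  have hinner : ⟪x, ((ω : ℂ) * (⟪a, x⟫_ℂ / (‖a‖ : ℂ) ^ 2)) • a⟫_ℂ
      = ((ω * ‖⟪a, x⟫_ℂ‖ ^ 2 / ‖a‖ ^ 2 : ℝ) : ℂ) := by
    rw [inner_smul_right, ← inner_conj_symm x a, mul_assoc, div_mul_eq_mul_div,
      Complex.mul_conj']
    push_cast
    ring
  rw [relaxProj, @norm_sub_sq ℂ, hinner, RCLike.re_to_complex, Complex.ofReal_re,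
    norm_smul, norm_mul, norm_div, norm_pow, Complex.norm_real, Complex.norm_real,
    Real.norm_eq_abs, norm_norm]
  field_simp
  rw [sq_abs]
  ring

theorem norm_relaxProj_le (a : EuclideanSpace ℂ (Fin d)) {ω : ℝ} (hω : ω ∈ Set.Icc (0 : ℝ) 2)
    (x : EuclideanSpace ℂ (Fin d)) : ‖relaxProj a ω x‖ ≤ ‖x‖ := by
  have : 0 ≤ ω * (2 - ω) * ‖⟪a, x⟫_ℂ‖ ^ 2 / ‖a‖ ^ 2 := by
    have := hω.1; have := hω.2; positivity
  refine pow_le_pow_iff_left₀ (norm_nonneg _) (norm_nonneg _) two_ne_zero |>.1 ?_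
  linarith [norm_relaxProj_sq a ω x]

theorem norm_relaxProj_lt (a : EuclideanSpace ℂ (Fin d)) {ω : ℝ} (hω : ω ∈ Set.Ioo (0 : ℝ) 2)
    {x : EuclideanSpace ℂ (Fin d)} (hx : ⟪a, x⟫_ℂ ≠ 0) : ‖relaxProj a ω x‖ < ‖x‖ := by
  have ha : a ≠ 0 := by rintro rfl; exact hx (inner_zero_left x)
  have : 0 < ω * (2 - ω) * ‖⟪a, x⟫_ℂ‖ ^ 2 / ‖a‖ ^ 2 := by
    have := hω.1; have : 0 < 2 - ω := by linarith [hω.2]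
    have := norm_pos_iff.2 ha; have := norm_pos_iff.2 hx
    positivity
  refine pow_lt_pow_iff_left₀ (norm_nonneg _) (norm_nonneg _) two_ne_zero |>.1 ?_
  linarith [norm_relaxProj_sq a ω x]

theorem relaxProj_of_inner_eq_zero (a : EuclideanSpace ℂ (Fin d)) (ω : ℝ)
    {x : EuclideanSpace ℂ (Fin d)} (hx : ⟪a, x⟫_ℂ = 0) : relaxProj a ω x = x := by
  simp [relaxProj, hx]

noncomputable def relaxProjCLM (a : EuclideanSpace ℂ (Fin d)) (ω : ℝ) :
    EuclideanSpace ℂ (Fin d) →L[ℂ] EuclideanSpace ℂ (Fin d) :=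
  ContinuousLinearMap.id ℂ _ - (((ω : ℂ) / (‖a‖ : ℂ) ^ 2) • innerSL ℂ a).smulRight a

theorem coe_relaxProjCLM (a : EuclideanSpace ℂ (Fin d)) (ω : ℝ) :
    ⇑(relaxProjCLM a ω) = relaxProj a ω := by
  ext1 x
  simp only [relaxProjCLM, relaxProj, sub_apply, ContinuousLinearMap.id_apply,
    ContinuousLinearMap.smulRight_apply, smul_apply, innerSL_apply_apply,
    smul_eq_mul, mul_div_assoc']
  ring_nf

variable {ι : Type*} {a : ι → EuclideanSpace ℂ (Fin d)} {ω : ι → ℝ}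

theorem norm_foldl_relaxProj_le (hω : ∀ i, ω i ∈ Set.Icc (0 : ℝ) 2) (l : List ι)
    (x : EuclideanSpace ℂ (Fin d)) :
    ‖l.foldl (fun y i => relaxProj (a i) (ω i) y) x‖ ≤ ‖x‖ := by
  induction l generalizing x with
  | nil => rfl
  | cons i l ih => exact (ih _).trans (norm_relaxProj_le (a i) (hω i) x)

theorem norm_foldl_relaxProj_lt (hω : ∀ i, ω i ∈ Set.Ioo (0 : ℝ) 2) {l : List ι}
    {x : EuclideanSpace ℂ (Fin d)} (hx : ∃ i ∈ l, ⟪a i, x⟫_ℂ ≠ 0) :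
    ‖l.foldl (fun y i => relaxProj (a i) (ω i) y) x‖ < ‖x‖ := by
  induction l with
  | nil => simp at hx
  | cons i l ih =>
    rw [List.foldl_cons]
    by_cases hi : ⟪a i, x⟫_ℂ = 0
    · rw [relaxProj_of_inner_eq_zero (a i) (ω i) hi]
      refine ih ?_
      obtain ⟨j, hj, hjx⟩ := hx
      exact ⟨j, (List.mem_cons.1 hj).resolve_left (by rintro rfl; exact hjx hi), hjx⟩
    · exact (norm_foldl_relaxProj_le (fun j => Set.Ioo_subset_Icc_self (hω j)) l _).trans_lt
        (norm_relaxProj_lt (a i) (hω i) hi)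

end

theorem stmt_6_general {d n : ℕ} (a : Fin n → EuclideanSpace ℂ (Fin d))
    (ω : Fin n → ℝ) (hω : ∀ i, ω i ∈ Set.Ioo (0 : ℝ) 2)
    (R : EuclideanSpace ℂ (Fin d) → EuclideanSpace ℂ (Fin d))
    (hR : ∀ x, R x = (List.finRange n).foldl (fun y i => relaxProj (a i) (ω i) y) x) :
    ∃ α : ℝ, α < 1 ∧ ∀ x ∈ Submodule.span ℂ (Set.range a), ‖R x‖ ≤ α * ‖x‖ := by
  set T := (List.finRange n).foldl (fun S i => (relaxProjCLM (a i) (ω i)).comp S)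
    (ContinuousLinearMap.id ℂ _)
  have hT : ∀ x, T x = (List.finRange n).foldl (fun y i => relaxProj (a i) (ω i) y) x := by
    intro x
    rw [← List.foldl_apply_eq_foldl_comp]
    simp only [coe_relaxProjCLM, ContinuousLinearMap.id_apply]
  have hcontract : ∀ x ∈ Submodule.span ℂ (Set.range a), x ≠ 0 → ‖T x‖ < ‖x‖ := by
    intro x hx hx0
    rw [hT]
    refine norm_foldl_relaxProj_lt hω ?_
    by_contra! h
    exact hx0 (eq_zero_of_mem_span_of_forall_inner_eq_zero hx fun i => h i (List.mem_finRange i))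
  simpa only [hR, hT] using T.exists_lt_one_norm_apply_le_on _ hcontract

/-- If `R = P_{a_n}^{ω_n} ∘ ⋯ ∘ P_{a_1}^{ω_1}` with all `ω_j ∈ (0,2)`, then there
exists `α < 1` with `‖R x‖ ≤ α ‖x‖` for every `x ∈ span{a_1,…,a_n}`. -/
theorem stmt_6 {d n : ℕ} (a : Fin n → EuclideanSpace ℂ (Fin d)) (ha : ∀ i, a i ≠ 0)
    (ω : Fin n → ℝ) (hω : ∀ i, ω i ∈ Set.Ioo (0 : ℝ) 2)
    (R : EuclideanSpace ℂ (Fin d) → EuclideanSpace ℂ (Fin d))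
    (hR : ∀ x, R x = (List.finRange n).foldl (fun y i => relaxProj (a i) (ω i) y) x) :
    ∃ α : ℝ, α < 1 ∧ ∀ x ∈ Submodule.span ℂ (Set.range a), ‖R x‖ ≤ α * ‖x‖ :=
  stmt_6_general a ω hω R hR
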